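/- arXiv:math/0510122 — 9 statements merged into one kernel-verified Lean document; each statement's English description precedes it below -/
import Mathlib

section
/- Let B be a complete Boolean algebra and g an automorphism of B. Then var(g) = sup { a ∈ B : a ∧ g(a) = 0 }, where var(g) := ¬ fix(g) and fix(g) := sup { a ∈ B : g restricted to elements below a is the identity }. -/
/-- `fix g` is the supremum of all `a` such that `g` restricted below `a` is the identity. -/
def fixb {B : Type*} [CompleteBooleanAlgebra B] (g : B ≃o B) : B :=
  sSup {a : B | ∀ b ≤ a, g b = b}

/-- `var g` is the complement of `fix g`. -/
def varb {B : Type*} [CompleteBooleanAlgebra B] (g : B ≃o B) : B :=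
  (fixb g)ᶜ

/-- `var g = sup { a : a ⊓ g a = ⊥ }`. -/
theorem stmt1 {B : Type*} [CompleteBooleanAlgebra B] (g : B ≃o B) :
    varb g = sSup {a : B | a ⊓ g a = ⊥} := by
  set t := sSup {a : B | a ⊓ g a = ⊥} with ht
  have key : ∀ b ≤ tᶜ, g b = b := by
    intro b hb
    have h1 : b ≤ g b := by
      have hmem : b ⊓ (g b)ᶜ ∈ {a : B | a ⊓ g a = ⊥} := by
        refine le_bot_iff.mp ?_
        calc b ⊓ (g b)ᶜ ⊓ g (b ⊓ (g b)ᶜ) ≤ (g b)ᶜ ⊓ g b :=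
              inf_le_inf inf_le_right (g.monotone inf_le_left)
          _ = ⊥ := compl_inf_self _
      have h2 : b ⊓ (g b)ᶜ ≤ t := le_sSup hmem
      have h3 : b ⊓ (g b)ᶜ ≤ tᶜ := le_trans inf_le_left hb
      have h4 : b ⊓ (g b)ᶜ = ⊥ :=
        le_bot_iff.mp ((le_inf h2 h3).trans (inf_compl_self t).le)
      rw [← sdiff_eq] at h4
      exact sdiff_eq_bot_iff.mp h4
    have h2 : g b ≤ b := by
      have hmem0 : (b ⊓ (g.symm b)ᶜ) ⊓ g.symm (b ⊓ (g.symm b)ᶜ) = ⊥ := by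
        refine le_bot_iff.mp ?_
        calc (b ⊓ (g.symm b)ᶜ) ⊓ g.symm (b ⊓ (g.symm b)ᶜ) ≤ (g.symm b)ᶜ ⊓ g.symm b :=
              inf_le_inf inf_le_right (g.symm.monotone inf_le_left)
          _ = ⊥ := compl_inf_self _
      have hmem : b ⊓ (g.symm b)ᶜ ∈ {a : B | a ⊓ g a = ⊥} := by
        have := congrArg g hmem0
        rw [map_inf, g.apply_symm_apply, map_bot] at this
        simpa [inf_comm] using this
      have h2' : b ⊓ (g.symm b)ᶜ ≤ t := le_sSup hmem
      have h3 : b ⊓ (g.symm b)ᶜ ≤ tᶜ := le_trans inf_le_left hb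
      have h4 : b ⊓ (g.symm b)ᶜ = ⊥ :=
        le_bot_iff.mp ((le_inf h2' h3).trans (inf_compl_self t).le)
      rw [← sdiff_eq] at h4
      have : b ≤ g.symm b := sdiff_eq_bot_iff.mp h4
      calc g b ≤ g (g.symm b) := g.monotone this
        _ = b := g.apply_symm_apply b
    exact le_antisymm h2 h1
  apply le_antisymm
  · rw [varb, compl_le_iff_compl_le]
    exact le_sSup key
  · refine sSup_le fun a ha => ?_
    rw [varb, le_compl_iff_disjoint_right, fixb, disjoint_sSup_iff]
    intro c hc
    rw [disjoint_iff, ← le_bot_iff]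
    calc a ⊓ c ≤ a ⊓ g a := by
          refine le_inf inf_le_left ?_
          have : g (a ⊓ c) = a ⊓ c := hc _ inf_le_right
          calc a ⊓ c = g (a ⊓ c) := this.symm
            _ ≤ g a := g.monotone inf_le_left
      _ = ⊥ := ha
end

section
/- Let B be a complete Boolean algebra and f, g automorphisms of B with var(f) ∧ var(g) = 0. Then var(f ∘ g) = var(f) ∨ var(g). -/
lemma fixb_fix {B : Type*} [CompleteBooleanAlgebra B] (g : B ≃o B) {b : B}
    (hb : b ≤ fixb g) : g b = b := by
  have hb' : b = ⨆ a ∈ {a : B | ∀ c ≤ a, g c = c}, b ⊓ a := by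
    rw [← inf_sSup_eq]
    exact (inf_eq_left.mpr hb).symm
  calc g b = g (⨆ a ∈ {a : B | ∀ c ≤ a, g c = c}, b ⊓ a) := by rw [← hb']
    _ = ⨆ a ∈ {a : B | ∀ c ≤ a, g c = c}, g (b ⊓ a) := by
        simp [map_iSup]
    _ = ⨆ a ∈ {a : B | ∀ c ≤ a, g c = c}, b ⊓ a := by
        refine iSup_congr fun a => iSup_congr fun ha => ?_
        exact ha _ inf_le_right
    _ = b := hb'.symm

/-- If `var f ⊓ var g = ⊥`, then `var (f ∘ g) = var f ⊔ var g`. -/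
theorem stmt5 {B : Type*} [CompleteBooleanAlgebra B] (f g : B ≃o B)
    (h : varb f ⊓ varb g = ⊥) :
    varb (f * g) = varb f ⊔ varb g := by
  unfold varb at *
  rw [← compl_sup] at h
  have htop : fixb f ⊔ fixb g = ⊤ := by
    have := congrArg compl h
    simpa using this
  rw [← compl_inf]
  congr 1
  -- fixb (f*g) = fixb f ⊓ fixb g
  apply le_antisymm
  · -- every b ≤ fixb (f*g) is fixed by f and g
    have key : ∀ b ≤ fixb (f * g), g b = b ∧ f b = b := by
      intro b hb
      have hgb : g b = b := by
        have hb1 : b = (b ⊓ fixb f) ⊔ (b ⊓ fixb g) := by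
          rw [← inf_sup_left, htop, inf_top_eq]
        have h1 : g (b ⊓ fixb f) = b ⊓ fixb f := by
          have hfg : f (g (b ⊓ fixb f)) = b ⊓ fixb f :=
            fixb_fix (f * g) (le_trans inf_le_left hb)
          have hf : f (b ⊓ fixb f) = b ⊓ fixb f :=
            fixb_fix f inf_le_right
          exact f.injective (hfg.trans hf.symm)
        have h2 : g (b ⊓ fixb g) = b ⊓ fixb g :=
          fixb_fix g inf_le_right
        calc g b = g ((b ⊓ fixb f) ⊔ (b ⊓ fixb g)) := by rw [← hb1]
          _ = g (b ⊓ fixb f) ⊔ g (b ⊓ fixb g) := g.map_sup _ _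
          _ = b := by rw [h1, h2, ← hb1]
      refine ⟨hgb, ?_⟩
      have : f (g b) = b := fixb_fix (f * g) hb
      rwa [hgb] at this
    exact le_inf (le_sSup fun b hb => (key b hb).2) (le_sSup fun b hb => (key b hb).1)
  · refine le_sSup fun b hb => ?_
    show f (g b) = b
    rw [fixb_fix g (le_trans hb inf_le_right), fixb_fix f (le_trans hb inf_le_left)]
end

section
/- Let B be a complete Boolean algebra and f, g automorphisms of B with var(f) ∧ var(g) = 0. Then f and g commute: f ∘ g = g ∘ f. -/
lemma fixb_key {B : Type*} [CompleteBooleanAlgebra B] (f g : B ≃o B)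
    (hT : fixb f ⊔ fixb g = ⊤) {b : B} (hb : b ≤ fixb f) : f (g b) = g b := by
  have hd : g b = (g b ⊓ fixb f) ⊔ (g b ⊓ fixb g) := by
    rw [← inf_sup_left, hT, inf_top_eq]
  have hy : g b ⊓ fixb g ≤ fixb f := by
    have h1 : g (g b ⊓ fixb g) = g b ⊓ fixb g := fixb_fix g inf_le_right
    have h2 : g b ⊓ fixb g = g.symm (g b ⊓ fixb g) := by
      have := congrArg g.symm h1
      rw [g.symm_apply_apply] at this
      exact this
    calc g b ⊓ fixb g = g.symm (g b ⊓ fixb g) := h2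
      _ ≤ g.symm (g b) := g.symm.monotone inf_le_left
      _ = b := g.symm_apply_apply b
      _ ≤ fixb f := hb
  calc f (g b) = f ((g b ⊓ fixb f) ⊔ (g b ⊓ fixb g)) := by rw [← hd]
    _ = f (g b ⊓ fixb f) ⊔ f (g b ⊓ fixb g) := map_sup f _ _
    _ = (g b ⊓ fixb f) ⊔ (g b ⊓ fixb g) := by
        rw [fixb_fix f inf_le_right, fixb_fix f hy]
    _ = g b := hd.symm

/-- If `var f ⊓ var g = ⊥`, then `f` and `g` commute. -/
theorem stmt6 {B : Type*} [CompleteBooleanAlgebra B] (f g : B ≃o B)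
    (h : varb f ⊓ varb g = ⊥) :
    f * g = g * f := by
  have hT : fixb f ⊔ fixb g = ⊤ := by
    have := congrArg compl h
    rwa [compl_inf, compl_bot, varb, varb, compl_compl, compl_compl] at this
  have hT' : fixb g ⊔ fixb f = ⊤ := by rwa [sup_comm] at hT
  have key : ∀ x : B, f (g x) = g (f x) := by
    intro x
    have hx : x = (x ⊓ fixb f) ⊔ (x ⊓ fixb g) := by
      rw [← inf_sup_left, hT, inf_top_eq]
    set x₁ := x ⊓ fixb f
    set x₂ := x ⊓ fixb g
    have h1 : x₁ ≤ fixb f := inf_le_right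
    have h2 : x₂ ≤ fixb g := inf_le_right
    calc f (g x) = f (g (x₁ ⊔ x₂)) := by rw [← hx]
      _ = f (g x₁) ⊔ f (g x₂) := by rw [map_sup, map_sup]
      _ = g x₁ ⊔ f x₂ := by rw [fixb_key f g hT h1, fixb_fix g h2]
      _ = g x₁ ⊔ g (f x₂) := by rw [fixb_key g f hT' h2]
      _ = g (f x₁) ⊔ g (f x₂) := by rw [fixb_fix f h1]
      _ = g (f (x₁ ⊔ x₂)) := by rw [map_sup, map_sup]
      _ = g (f x) := by rw [← hx]
  ext x
  exact key x
end

section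
/- Let B be a complete Boolean algebra, g₁, …, gₙ automorphisms of B, and 0 ≠ a ≤ var(g₁) ∧ ⋯ ∧ var(gₙ). Then there exists a nonzero b ≤ a such that b ∧ (g₁(b) ∨ ⋯ ∨ gₙ(b)) = 0. -/
lemma single_aux {B : Type*} [CompleteBooleanAlgebra B] (g : B ≃o B)
    (a : B) (ha : a ≠ ⊥) (hle : a ≤ varb g) :
    ∃ b : B, b ≠ ⊥ ∧ b ≤ a ∧ b ⊓ g b = ⊥ := by
  -- there is d ≤ a with g d ≠ d
  have hnotall : ¬ ∀ d ≤ a, g d = d := by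
    intro h
    have hfix : a ≤ fixb g := le_sSup h
    have : a ≤ fixb g ⊓ (fixb g)ᶜ := le_inf hfix hle
    rw [inf_compl_eq_bot] at this
    exact ha (le_bot_iff.mp this)
  push_neg at hnotall
  obtain ⟨d, hd, hne⟩ := hnotall
  by_cases hcase : d ≤ g d
  · refine ⟨g.symm (g d \ d), ?_, ?_, ?_⟩
    · intro h
      have : g d \ d = ⊥ := by
        have := congrArg g h
        simpa using this
      rw [sdiff_eq_bot_iff] at this
      exact hne (le_antisymm this hcase)
    · have h1 : g d \ d ≤ g d := sdiff_le
      calc g.symm (g d \ d) ≤ g.symm (g d) := g.symm.monotone h1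
        _ = d := g.symm_apply_apply d
        _ ≤ a := hd
    · have h1 : g.symm (g d \ d) ≤ d := by
        calc g.symm (g d \ d) ≤ g.symm (g d) := g.symm.monotone sdiff_le
          _ = d := g.symm_apply_apply d
      have h2 : g (g.symm (g d \ d)) = g d \ d := g.apply_symm_apply _
      rw [h2]
      exact le_bot_iff.mp (le_trans (inf_le_inf_right _ h1)
        (by simp))
  · refine ⟨d \ g d, ?_, le_trans sdiff_le hd, ?_⟩
    · rwa [ne_eq, sdiff_eq_bot_iff]
    · have h1 : g (d \ g d) ≤ g d := g.monotone sdiff_le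
      exact le_bot_iff.mp (le_trans (inf_le_inf_left _ h1)
        (by simp))

lemma multi_aux {B : Type*} [CompleteBooleanAlgebra B] :
    ∀ (n : ℕ) (g : Fin n → B ≃o B) (a : B), a ≠ ⊥ → (∀ i, a ≤ varb (g i)) →
    ∃ b : B, b ≠ ⊥ ∧ b ≤ a ∧ ∀ i, b ⊓ g i b = ⊥ := by
  intro n
  induction n with
  | zero => exact fun g a ha _ => ⟨a, ha, le_rfl, fun i => i.elim0⟩
  | succ n ih =>
    intro g a ha hle
    obtain ⟨b₁, hb₁ne, hb₁le, hb₁⟩ := single_aux (g (Fin.last n)) a ha (hle _)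
    obtain ⟨b, hbne, hble, hb⟩ := ih (fun i => g i.castSucc) b₁ hb₁ne
      (fun i => le_trans hb₁le (hle _))
    refine ⟨b, hbne, le_trans hble hb₁le, ?_⟩
    intro i
    refine Fin.lastCases ?_ (fun j => hb j) i
    have h1 : g (Fin.last n) b ≤ g (Fin.last n) b₁ := (g (Fin.last n)).monotone hble
    exact le_bot_iff.mp (le_trans (inf_le_inf hble h1) hb₁.le)

/-- Given automorphisms `g₁, …, gₙ` and `0 ≠ a ≤ var g₁ ⊓ ⋯ ⊓ var gₙ`, there is a
nonzero `b ≤ a` with `b ⊓ (g₁ b ⊔ ⋯ ⊔ gₙ b) = ⊥`. -/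
theorem stmt7 {B : Type*} [CompleteBooleanAlgebra B] {n : ℕ} (g : Fin n → B ≃o B)
    (a : B) (ha : a ≠ ⊥) (hle : a ≤ ⨅ i, varb (g i)) :
    ∃ b : B, b ≠ ⊥ ∧ b ≤ a ∧ b ⊓ (⨆ i, g i b) = ⊥ := by
  obtain ⟨b, hbne, hble, hb⟩ := multi_aux n g a ha
    (fun i => le_trans hle (iInf_le _ i))
  refine ⟨b, hbne, hble, ?_⟩
  rw [inf_iSup_eq]
  simp [hb]
end

section
/- Let B be a Boolean algebra, f an automorphism of B, k₀,…,kₙ integers, and a ∈ B such that f^{k₀}(a), …, f^{kₙ}(a) are pairwise disjoint. Then for all automorphisms h₁,…,hₙ of B commuting with f, and every nonzero b ≤ a, the join h₁(a) ∨ ⋯ ∨ hₙ(a) is not ≥ f^{k₀}(b) ∨ ⋯ ∨ f^{kₙ}(b). -/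
/-!
Refine `b` step by step: if `f^{k_j} c ≤ ⋁ᵢ hᵢ a` with `c ≠ ⊥`, distributivity gives some `i`
with `f^{k_j} c ⊓ hᵢ a ≠ ⊥`, and we may replace `c` by `c ⊓ f^{-k_j}(hᵢ a)`. After the `n + 1`
indices `j` we obtain `c ≠ ⊥` and an assignment `j ↦ σ j ∈ Fin n` with `f^{k_j} c ≤ h_{σ j} a`,
so by pigeonhole two indices `j ≠ j'` share the same `h = h_{σ j}`. Since `h` commutes with `f`,
`f^{k_j + k_j'} c ≤ h (f^{k_j'} a) ⊓ h (f^{k_j} a) = h ⊥ = ⊥`, a contradiction.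
-/

theorem exists_not_disjoint_of_le_sup {B ι : Type*} [DistribLattice B] [OrderBot B]
    {s : Finset ι} {y : ι → B} {x : B} (hx : x ≠ ⊥) (hle : x ≤ s.sup y) :
    ∃ i ∈ s, ¬ Disjoint x (y i) := by
  by_contra! hall
  exact hx ((Finset.disjoint_sup_right.mpr hall).eq_bot_of_le hle)

theorem exists_ne_bot_le_forall_map_le {B ι κ : Type*} [DistribLattice B] [OrderBot B]
    [Fintype κ] (g : ι → B ≃o B) (y : κ → B) {b : B} (hb : b ≠ ⊥) (t : Finset ι)
    (hle : ∀ j ∈ t, g j b ≤ Finset.univ.sup y) :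
    ∃ c, c ≠ ⊥ ∧ c ≤ b ∧ ∀ j ∈ t, ∃ i, g j c ≤ y i := by
  classical
  induction t using Finset.induction_on with
  | empty => exact ⟨b, hb, le_rfl, by simp⟩
  | @insert j t _ ih =>
    obtain ⟨c, hc, hcb, hct⟩ := ih fun j' hj' => hle j' (Finset.mem_insert_of_mem hj')
    have hgc : g j c ≤ Finset.univ.sup y :=
      ((g j).monotone hcb).trans (hle j (Finset.mem_insert_self j t))
    obtain ⟨i, -, hi⟩ := exists_not_disjoint_of_le_sup ((map_eq_bot_iff (g j)).not.mpr hc) hgc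
    have hci : ¬ Disjoint c ((g j).symm (y i)) := fun hd => hi (by
      simpa using hd.map_orderIso (g j))
    refine ⟨c ⊓ (g j).symm (y i), disjoint_iff.not.mp hci, inf_le_left.trans hcb, ?_⟩
    intro j' hj'
    rcases Finset.mem_insert.mp hj' with rfl | hj'
    · exact ⟨i, ((g j').le_symm_apply).mp inf_le_right⟩
    · obtain ⟨i', hi'⟩ := hct j' hj'
      exact ⟨i', ((g j').monotone inf_le_left).trans hi'⟩

theorem eq_bot_of_zpow_le_of_commute {B : Type*} [Lattice B] [OrderBot B] {f g : B ≃o B}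
    (hgf : Commute g f) {m m' : ℤ} {a c : B} (hdisj : Disjoint ((f ^ m) a) ((f ^ m') a))
    (hm : (f ^ m) c ≤ g a) (hm' : (f ^ m') c ≤ g a) : c = ⊥ := by
  have hfg : ∀ (p : ℤ) (x : B), (f ^ p) (g x) = g ((f ^ p) x) := fun p x =>
    DFunLike.congr_fun ((hgf.zpow_right p).eq.symm) x
  have hswap : (f ^ m') ((f ^ m) c) = (f ^ m) ((f ^ m') c) :=
    DFunLike.congr_fun (Commute.zpow_zpow_self f m' m).eq c
  have hle₁ : (f ^ m') ((f ^ m) c) ≤ g ((f ^ m') a) := hfg m' a ▸ (f ^ m').monotone hm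
  have hle₂ : (f ^ m') ((f ^ m) c) ≤ g ((f ^ m) a) := hswap ▸ hfg m a ▸ (f ^ m).monotone hm'
  have hbot : (f ^ m') ((f ^ m) c) = ⊥ := le_bot_iff.mp (hdisj.map_orderIso g hle₂ hle₁)
  rwa [map_eq_bot_iff, map_eq_bot_iff] at hbot

theorem stmt9_general {B : Type*} [BooleanAlgebra B] {n : ℕ} (f : B ≃o B)
    (k : Fin (n + 1) → ℤ) (a : B)
    (hdisj : ∀ i j, i ≠ j → (f ^ k i) a ⊓ (f ^ k j) a = ⊥)
    (h : Fin n → B ≃o B) (hcomm : ∀ i, h i * f = f * h i)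
    (b : B) (hb : b ≠ ⊥) :
    ¬ Finset.univ.sup (fun j => (f ^ k j) b) ≤ Finset.univ.sup (fun i => h i a) := by
  intro H
  have hle : ∀ j ∈ Finset.univ, (f ^ k j) b ≤ Finset.univ.sup (fun i => h i a) := fun j hj =>
    (Finset.le_sup (f := fun j => (f ^ k j) b) hj).trans H
  obtain ⟨c, hc, -, hcov⟩ :=
    exists_ne_bot_le_forall_map_le (fun j => f ^ k j) (fun i => h i a) hb Finset.univ hle
  choose σ hσ using fun j => hcov j (Finset.mem_univ j)
  obtain ⟨j, j', hjj', hσj⟩ := Fintype.exists_ne_map_eq_of_card_lt σ (by simp)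
  exact hc (eq_bot_of_zpow_le_of_commute (hcomm (σ j)) (disjoint_iff.mpr (hdisj j j' hjj'))
    (hσ j) (hσj ▸ hσ j'))

/-- If `f^{k₀} a, …, f^{kₙ} a` are pairwise disjoint, then for automorphisms `h₁, …, hₙ`
commuting with `f` and any nonzero `b ≤ a`,
`h₁ a ⊔ ⋯ ⊔ hₙ a` is not above `f^{k₀} b ⊔ ⋯ ⊔ f^{kₙ} b`. -/
theorem stmt9 {B : Type*} [BooleanAlgebra B] {n : ℕ} (f : B ≃o B)
    (k : Fin (n + 1) → ℤ) (a : B)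
    (hdisj : ∀ i j, i ≠ j → (f ^ k i) a ⊓ (f ^ k j) a = ⊥)
    (h : Fin n → B ≃o B) (hcomm : ∀ i, h i * f = f * h i)
    (b : B) (hb : b ≠ ⊥) (hba : b ≤ a) :
    ¬ Finset.univ.sup (fun j => (f ^ k j) b) ≤ Finset.univ.sup (fun i => h i a) :=
  stmt9_general f k a hdisj h hcomm b hb
end

section
/- Let B be an atomless complete Boolean algebra and G a locally moving subgroup of Aut(B). Then for every nonzero a ∈ B and every n ≥ 1 there exists h ∈ G with var(h) ≤ a and hⁿ ≠ id. -/
/-- `G` is a locally moving subgroup of `Aut(B)` if every nonzero `a` bounds the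
`var` of some nonidentity element of `G`. -/
def LocallyMoving {B : Type*} [CompleteBooleanAlgebra B] (G : Subgroup (B ≃o B)) : Prop :=
  ∀ a : B, a ≠ ⊥ → ∃ g ∈ G, g ≠ 1 ∧ varb g ≤ a

section Support

variable {B : Type*} [CompleteBooleanAlgebra B]

theorem le_fixb_iff {g : B ≃o B} {a : B} : a ≤ fixb g ↔ ∀ b ≤ a, g b = b := by
  refine ⟨fun ha b hb => ?_, fun h => le_sSup h⟩
  have hb' : b = ⨆ s ∈ {a : B | ∀ b ≤ a, g b = b}, b ⊓ s :=
    (inf_eq_left.mpr (hb.trans ha)).symm.trans inf_sSup_eq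
  rw [hb', map_iSup₂]
  exact iSup_congr fun s => iSup_congr fun hs => hs _ inf_le_right

theorem apply_eq_self_of_disjoint_varb {g : B ≃o B} {x : B} (h : Disjoint x (varb g)) :
    g x = x :=
  le_fixb_iff.mp (disjoint_compl_right_iff.mp h) x le_rfl

theorem varb_eq_bot_iff {g : B ≃o B} : varb g = ⊥ ↔ g = 1 := by
  rw [varb, compl_eq_bot, ← top_le_iff, le_fixb_iff]
  exact ⟨fun h => RelIso.ext fun b => h b le_top, by rintro rfl b -; rfl⟩

theorem exists_le_apply_ne_of_le_varb {g : B ≃o B} {c : B} (hc0 : c ≠ ⊥) (hc : c ≤ varb g) :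
    ∃ b ≤ c, g b ≠ b := by
  by_contra! h
  exact hc0 (disjoint_self.mp (disjoint_compl_right.mono (le_fixb_iff.mpr h) hc))

theorem eq_one_of_forall_le_apply_eq {g : B ≃o B} {c : B} (hc : varb g ≤ c)
    (h : ∀ x ≤ c, g x = x) : g = 1 := by
  by_contra hg
  obtain ⟨b, hb, hgb⟩ := exists_le_apply_ne_of_le_varb (varb_eq_bot_iff.not.mpr hg) le_rfl
  exact hgb (h b (hb.trans hc))

theorem apply_le_of_varb_le {g : B ≃o B} {c x : B} (hg : varb g ≤ c) (hx : x ≤ c) : g x ≤ c := by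
  have hgc : g cᶜ = cᶜ := apply_eq_self_of_disjoint_varb (disjoint_compl_left.mono_right hg)
  have := (disjoint_compl_right_iff.mpr hx).map_orderIso g
  rwa [hgc, disjoint_compl_right_iff] at this

theorem varb_mul_le (g f : B ≃o B) : varb (g * f) ≤ varb g ⊔ varb f := by
  rw [varb, varb, varb, ← compl_inf, compl_le_compl_iff_le, le_fixb_iff]
  intro b hb
  rw [RelIso.mul_apply, le_fixb_iff.mp inf_le_right b hb, le_fixb_iff.mp inf_le_left b hb]

theorem varb_pow_le (g : B ≃o B) (k : ℕ) : varb (g ^ k) ≤ varb g := by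
  induction k with
  | zero => simp [varb_eq_bot_iff.mpr]
  | succ k ih => exact pow_succ g k ▸ (varb_mul_le _ _).trans (sup_le ih le_rfl)

theorem varb_pow_of_coprime {g : B ≃o B} {k : ℕ} (h : k.Coprime (orderOf g)) :
    varb (g ^ k) = varb g := by
  obtain ⟨m, hm⟩ := exists_pow_eq_self_of_coprime h
  refine le_antisymm (varb_pow_le g k) ?_
  calc varb g = varb ((g ^ k) ^ m) := by rw [hm]
    _ ≤ varb (g ^ k) := varb_pow_le _ m

theorem disjoint_sdiff_apply (g : B ≃o B) (b : B) : Disjoint (b \ g b) (g (b \ g b)) :=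
  disjoint_sdiff_self_left.mono_right (g.monotone sdiff_le)

theorem exists_le_disjoint_apply {g : B ≃o B} {b : B} (hb : g b ≠ b) :
    ∃ d ≤ b, d ≠ ⊥ ∧ Disjoint d (g d) := by
  by_cases hle : b ≤ g b
  · have hd0 : b \ g⁻¹ b ≠ ⊥ := by
      rw [Ne, sdiff_eq_bot_iff]
      intro h
      have := g.monotone h
      rw [RelIso.apply_inv_self] at this
      exact hb (le_antisymm this hle)
    refine ⟨b \ g⁻¹ b, sdiff_le, hd0, ?_⟩
    have := (disjoint_sdiff_apply g⁻¹ b).map_orderIso g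
    rw [RelIso.apply_inv_self] at this
    exact this.symm
  · exact ⟨b \ g b, sdiff_le, by rwa [Ne, sdiff_eq_bot_iff], disjoint_sdiff_apply g b⟩

theorem exists_le_disjoint_pow_apply {g : B ≃o B} {c : B} (hc0 : c ≠ ⊥) (k : ℕ)
    (hc : ∀ i, 0 < i → i ≤ k → c ≤ varb (g ^ i)) :
    ∃ d ≤ c, d ≠ ⊥ ∧ ∀ i, 0 < i → i ≤ k → Disjoint d ((g ^ i) d) := by
  induction k with
  | zero => exact ⟨c, le_rfl, hc0, fun i hi hik => absurd hik (by omega)⟩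
  | succ k ih =>
    obtain ⟨d, hdc, hd0, hd⟩ := ih fun i hi hik => hc i hi (by omega)
    obtain ⟨b, hbd, hb⟩ :=
      exists_le_apply_ne_of_le_varb hd0 (hdc.trans (hc (k + 1) k.succ_pos le_rfl))
    obtain ⟨e, heb, he0, he⟩ := exists_le_disjoint_apply hb
    have hed : e ≤ d := heb.trans hbd
    refine ⟨e, hed.trans hdc, he0, fun i hi hik => ?_⟩
    rcases hik.lt_or_eq with hik | rfl
    · exact (hd i hi (by omega)).mono hed ((g ^ i).monotone hed)
    · exact he

theorem exists_le_varb_disjoint_pow_apply {g : B ≃o B} (hp : (orderOf g).Prime) :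
    ∃ c ≤ varb g, c ≠ ⊥ ∧ ∀ i, 0 < i → i < orderOf g → Disjoint c ((g ^ i) c) := by
  have hg : varb g ≠ ⊥ := varb_eq_bot_iff.not.mpr fun h => hp.ne_one (orderOf_eq_one_iff.mpr h)
  obtain ⟨c, hc, hc0, hdisj⟩ := exists_le_disjoint_pow_apply hg (orderOf g - 1)
    fun i hi hik => (varb_pow_of_coprime (Nat.coprime_of_lt_prime hi.ne' (by omega) hp).symm).ge
  exact ⟨c, hc, hc0, fun i hi hlt => hdisj i hi (by omega)⟩

section Orbit

variable {g f : B ≃o B} {c : B} {p : ℕ}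

theorem mul_pow_succ_apply_of_disjoint (hc : ∀ i, 0 < i → i < p → Disjoint c ((g ^ i) c))
    (hf : varb f ≤ c) {j : ℕ} (hj : j < p) {x : B} (hx : x ≤ c) :
    ((g * f) ^ (j + 1)) x = (g ^ (j + 1)) (f x) := by
  induction j with
  | zero => rfl
  | succ j ih =>
    have hfx : (g ^ (j + 1)) (f x) ≤ (g ^ (j + 1)) c :=
      (g ^ (j + 1)).monotone (apply_le_of_varb_le hf hx)
    have hfix : f ((g ^ (j + 1)) (f x)) = (g ^ (j + 1)) (f x) :=
      apply_eq_self_of_disjoint_varb ((hc (j + 1) j.succ_pos hj).mono hf hfx).symm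
    rw [pow_succ', RelIso.mul_apply, ih (by omega), RelIso.mul_apply, hfix, pow_succ' g (j + 1),
      RelIso.mul_apply]

theorem mul_pow_mul_apply_of_disjoint (hgp : g ^ p = 1) (hp : 0 < p)
    (hc : ∀ i, 0 < i → i < p → Disjoint c ((g ^ i) c)) (hf : varb f ≤ c) (q : ℕ) {x : B}
    (hx : x ≤ c) : ((g * f) ^ (p * q)) x = (f ^ q) x := by
  have hpow : ∀ y ≤ c, ((g * f) ^ p) y = f y := by
    intro y hy
    obtain ⟨j, rfl⟩ := Nat.exists_eq_succ_of_ne_zero hp.ne'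
    rw [mul_pow_succ_apply_of_disjoint hc hf j.lt_succ_self hy, hgp]
    rfl
  induction q generalizing x with
  | zero => rfl
  | succ q ih =>
    rw [Nat.mul_succ, pow_add, RelIso.mul_apply, hpow x hx, ih (apply_le_of_varb_le hf hx),
      pow_succ, RelIso.mul_apply]

theorem mul_pow_mul_ne_one_of_disjoint (hgp : g ^ p = 1) (hp : 0 < p)
    (hc : ∀ i, 0 < i → i < p → Disjoint c ((g ^ i) c)) (hf : varb f ≤ c) {q : ℕ}
    (hfq : f ^ q ≠ 1) : (g * f) ^ (p * q) ≠ 1 := by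
  intro h
  refine hfq (eq_one_of_forall_le_apply_eq ((varb_pow_le f q).trans hf) fun x hx => ?_)
  rw [← mul_pow_mul_apply_of_disjoint hgp hp hc hf q hx, h]
  rfl

end Orbit

theorem LocallyMoving.exists_pow_ne_one_or_prime_orderOf {G : Subgroup (B ≃o B)}
    (hG : LocallyMoving G) {a : B} (ha : a ≠ ⊥) {n : ℕ} (hn : 0 < n) :
    (∃ h ∈ G, varb h ≤ a ∧ h ^ n ≠ 1) ∨
      ∃ g ∈ G, varb g ≤ a ∧ (orderOf g).Prime ∧ orderOf g ∣ n := by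
  obtain ⟨g, hgG, hg1, hga⟩ := hG a ha
  by_cases hgn : g ^ n = 1
  · right
    have hmn : orderOf g ∣ n := orderOf_dvd_of_pow_eq_one hgn
    have hm0 : orderOf g ≠ 0 := (Nat.pos_of_dvd_of_pos hmn hn).ne'
    have hm1 : orderOf g ≠ 1 := fun h => hg1 (orderOf_eq_one_iff.mp h)
    have hord := orderOf_pow_orderOf_div hm0 (Nat.minFac_dvd (orderOf g))
    refine ⟨g ^ (orderOf g / (orderOf g).minFac), G.pow_mem hgG _,
      (varb_pow_le g _).trans hga, ?_, ?_⟩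
    · rw [hord]; exact Nat.minFac_prime hm1
    · rw [hord]; exact (Nat.minFac_dvd _).trans hmn
  · exact Or.inl ⟨g, hgG, hga, hgn⟩

end Support

theorem stmt10_general {B : Type*} [CompleteBooleanAlgebra B]
    (G : Subgroup (B ≃o B)) (hG : LocallyMoving G) :
    ∀ a : B, a ≠ ⊥ → ∀ n : ℕ, 1 ≤ n → ∃ h ∈ G, varb h ≤ a ∧ h ^ n ≠ 1 := by
  intro a ha n hn
  induction n using Nat.strong_induction_on generalizing a with
  | _ n ih =>
  obtain h | ⟨g, hgG, hga, hp, q, rfl⟩ := hG.exists_pow_ne_one_or_prime_orderOf ha hn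
  · exact h
  obtain ⟨c, hcg, hc0, hc⟩ := exists_le_varb_disjoint_pow_apply hp
  have hq : 0 < q := Nat.pos_of_mul_pos_left hn
  obtain ⟨f, hfG, hfc, hfq⟩ := ih q (lt_mul_left hq hp.one_lt) c hc0 hq
  refine ⟨g * f, G.mul_mem hgG hfG,
    (varb_mul_le g f).trans (sup_le hga (hfc.trans (hcg.trans hga))), ?_⟩
  exact mul_pow_mul_ne_one_of_disjoint (pow_orderOf_eq_one g) hp.pos hc hfc hfq

/-- For a locally moving subgroup of an atomless complete Boolean algebra, for every
nonzero `a` and every `n ≥ 1` there is `h ∈ G` with `var h ≤ a` and `hⁿ ≠ 1`. -/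
theorem stmt10 {B : Type*} [CompleteBooleanAlgebra B] (hatomless : ∀ x : B, ¬ IsAtom x)
    (G : Subgroup (B ≃o B)) (hG : LocallyMoving G) :
    ∀ a : B, a ≠ ⊥ → ∀ n : ℕ, 1 ≤ n → ∃ h ∈ G, varb h ≤ a ∧ h ^ n ≠ 1 :=
  stmt10_general G hG
end

section
/- Let B be an atomless complete Boolean algebra, G a locally moving subgroup of Aut(B), f ∈ G, and 0 ≠ a ≤ var(f). Then there exists g ∈ G with var(g) ≤ a and gf ≠ fg. -/
/-
Since `a ≤ var f`, `f` moves some `c ≤ a`, and then some nonzero `b ≤ c` is carried off itself: `f b ⊓ b = 0`.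
Local movability gives `g ≠ 1` supported in `b`. If `g` commuted with `f`, then for `x ≤ b` we would
have `f (g x) = g (f x) = f x`, because `f x` lies outside the support of `g`; so `g` would fix
everything below `b` as well as below `bᶜ`, forcing `g = 1`.
-/

theorem disjoint_apply_sdiff {α : Type*} [BooleanAlgebra α] (f : α ≃o α) (c : α) :
    Disjoint (f (c \ f c)) (c \ f c) :=
  disjoint_sdiff_self_right.mono_left (f.monotone sdiff_le)

theorem exists_le_ne_bot_disjoint_apply {α : Type*} [BooleanAlgebra α] {f : α ≃o α} {c : α}
    (hc : f c ≠ c) : ∃ b ≤ c, b ≠ ⊥ ∧ Disjoint (f b) b := by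
  by_cases h : c \ f c = ⊥
  -- then `c < f c`, so `c \ f⁻¹ c` is the nonzero piece, moved off itself by `f⁻¹` and hence by `f`
  · refine ⟨c \ f.symm c, sdiff_le, fun h' => hc ?_, ?_⟩
    · have hle : c ≤ f.symm c := sdiff_eq_bot_iff.mp h'
      exact le_antisymm (by simpa using f.monotone hle) (sdiff_eq_bot_iff.mp h)
    · have := (disjoint_apply_sdiff f.symm c).map_orderIso f
      simpa using this.symm
  · exact ⟨c \ f c, sdiff_le, h, disjoint_apply_sdiff f c⟩

section

variable {B : Type*} [CompleteBooleanAlgebra B]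

theorem le_fixb {g : B ≃o B} {a : B} (h : ∀ b ≤ a, g b = b) : a ≤ fixb g :=
  le_sSup h

theorem apply_eq_self_of_le_fixb {g : B ≃o B} {x : B} (hx : x ≤ fixb g) : g x = x :=
  calc g x = g (⨆ b ∈ {a : B | ∀ c ≤ a, g c = c}, x ⊓ b) := by
        rw [← inf_sSup_eq, ← fixb, inf_eq_left.mpr hx]
    _ = ⨆ b ∈ {a : B | ∀ c ≤ a, g c = c}, x ⊓ b := by
        rw [map_iSup₂]
        exact iSup_congr fun b => iSup_congr fun hb => hb _ inf_le_right
    _ = x := by rw [← inf_sSup_eq, ← fixb, inf_eq_left.mpr hx]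

theorem eq_one_of_fixb_eq_top {g : B ≃o B} (h : fixb g = ⊤) : g = 1 :=
  OrderIso.ext <| funext fun _ => apply_eq_self_of_le_fixb (h ▸ le_top)

theorem exists_le_apply_ne_of_le_varb_s11 {f : B ≃o B} {a : B} (ha : a ≠ ⊥) (hle : a ≤ varb f) :
    ∃ c ≤ a, f c ≠ c := by
  by_contra! h
  have hfix : a ≤ fixb f := le_fixb h
  exact ha (le_bot_iff.mp (by simpa [varb] using le_inf hfix hle))

theorem Commute.eq_one_of_varb_le_of_disjoint {f g : B ≃o B} {b : B} (hcomm : Commute g f)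
    (hgb : varb g ≤ b) (hfb : Disjoint (f b) b) : g = 1 := by
  have hcompl : bᶜ ≤ fixb g := compl_le_of_compl_le hgb
  have hb : b ≤ fixb g := le_fixb fun x hx => by
    have hfx : f x ≤ fixb g := ((f.monotone hx).trans hfb.le_compl_right).trans hcompl
    apply f.injective
    calc f (g x) = g (f x) := (DFunLike.congr_fun hcomm x).symm
      _ = f x := apply_eq_self_of_le_fixb hfx
  exact eq_one_of_fixb_eq_top <| top_le_iff.mp <| sup_compl_eq_top (x := b) ▸ sup_le hb hcompl

end

theorem stmt11_general {B : Type*} [CompleteBooleanAlgebra B]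
    (G : Subgroup (B ≃o B)) (hG : LocallyMoving G)
    (f : B ≃o B) (a : B) (ha : a ≠ ⊥) (hle : a ≤ varb f) :
    ∃ g ∈ G, varb g ≤ a ∧ g * f ≠ f * g := by
  obtain ⟨c, hca, hfc⟩ := exists_le_apply_ne_of_le_varb_s11 ha hle
  obtain ⟨b, hbc, hb, hfb⟩ := exists_le_ne_bot_disjoint_apply hfc
  obtain ⟨g, hgG, hg1, hgb⟩ := hG b hb
  exact ⟨g, hgG, hgb.trans (hbc.trans hca),
    fun hcomm => hg1 (Commute.eq_one_of_varb_le_of_disjoint hcomm hgb hfb)⟩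

/-- If `f ∈ G` and `0 ≠ a ≤ var f`, there is `g ∈ G` with `var g ≤ a` not commuting with `f`. -/
theorem stmt11 {B : Type*} [CompleteBooleanAlgebra B] (hatomless : ∀ x : B, ¬ IsAtom x)
    (G : Subgroup (B ≃o B)) (hG : LocallyMoving G)
    (f : B ≃o B) (hf : f ∈ G) (a : B) (ha : a ≠ ⊥) (hle : a ≤ varb f) :
    ∃ g ∈ G, varb g ≤ a ∧ g * f ≠ f * g :=
  stmt11_general G hG f a ha hle
end

section
/- Let G be a subgroup of Aut(L,<) for a dense linear order L without endpoints, such that G is closed under pointwise max and min (a lattice-ordered permutation group), G acts transitively on L, and G is inclusion-transitive (for all bounded open intervals I, J there exists g ∈ G with g(I) ⊆ J). Then G is highly o-transitive on L: for every n and all a₁ < ⋯ < aₙ and b₁ < ⋯ < bₙ in L there exists g ∈ G with g(aᵢ) = bᵢ for all i. -/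
/-!
Extend a partial map `a ↦ b` one point at a time. Having matched the first points, it remains
to move the image `x` of the next point to its target `y` while fixing a bounded interval
`[u, v]` below both. Inclusion-transitivity gives `k ∈ G` stretching `(v, x)` over `[u, y]`,
so that `k v < u` and `y < k x`; if `f ∈ G` sends `x` to `y ≥ x`, then `(f ⊓ k) ⊔ 1` still
sends `x` to `y` and is the identity on `[u, v]`, where `k` lies below the identity. The case
`y < x` follows by inverting.
-/

open Set

section

variable {L : Type*} [LinearOrder L]

theorem exists_mem_lt_and_lt_of_inclusion_transitive [NoMinOrder L] [NoMaxOrder L]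
    (G : Subgroup (L ≃o L))
    (hincl : ∀ a b c d : L, a < b → c < d → ∃ g ∈ G, (⇑g) '' Ioo a b ⊆ Ioo c d)
    {v x : L} (hvx : v < x) (u y : L) :
    ∃ k ∈ G, k v < u ∧ y < k x := by
  obtain ⟨u', hu'⟩ := exists_lt (min u y)
  obtain ⟨y', hy'⟩ := exists_gt (max u y)
  have hu'y' : u' < y' := hu'.trans_le (min_le_max.trans hy'.le)
  obtain ⟨g, hgG, hg⟩ := hincl u' y' v x hu'y' hvx
  have hmem : ∀ z, min u y ≤ z → z ≤ max u y → g z ∈ Ioo v x := fun z hz₁ hz₂ =>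
    hg (mem_image_of_mem _ ⟨hu'.trans_le hz₁, hz₂.trans_lt hy'⟩)
  refine ⟨g⁻¹, G.inv_mem hgG, ?_, ?_⟩
  · rw [← g.lt_iff_lt, RelIso.apply_inv_self]
    exact (hmem u (min_le_left u y) (le_max_left u y)).1
  · rw [← g.lt_iff_lt, RelIso.apply_inv_self]
    exact (hmem y (min_le_right u y) (le_max_right u y)).2

theorem exists_mem_apply_eq_of_le_fixing_Icc [NoMinOrder L] [NoMaxOrder L]
    (G : Subgroup (L ≃o L))
    (hsup : ∀ f g : L ≃o L, f ∈ G → g ∈ G → ∃ h ∈ G, ∀ x, h x = max (f x) (g x))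
    (hinf : ∀ f g : L ≃o L, f ∈ G → g ∈ G → ∃ h ∈ G, ∀ x, h x = min (f x) (g x))
    (htrans : ∀ a b : L, ∃ g ∈ G, g a = b)
    (hincl : ∀ a b c d : L, a < b → c < d → ∃ g ∈ G, (⇑g) '' Ioo a b ⊆ Ioo c d)
    {u v x y : L} (hvx : v < x) (hxy : x ≤ y) :
    ∃ h ∈ G, h x = y ∧ ∀ z ∈ Icc u v, h z = z := by
  obtain ⟨f, hfG, hfx⟩ := htrans x y
  obtain ⟨k, hkG, hkv, hkx⟩ := exists_mem_lt_and_lt_of_inclusion_transitive G hincl hvx u y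
  obtain ⟨m, hmG, hm⟩ := hinf f k hfG hkG
  obtain ⟨h, hhG, hh⟩ := hsup m 1 hmG G.one_mem
  refine ⟨h, hhG, ?_, fun z hz => ?_⟩
  · rw [hh, hm, hfx, min_eq_left hkx.le]
    exact max_eq_left hxy
  · have hkz : k z ≤ z := ((k.monotone hz.2).trans_lt hkv).le.trans hz.1
    rw [hh, hm]
    exact max_eq_right ((min_le_right _ _).trans hkz)

theorem exists_mem_apply_eq_fixing_Icc [NoMinOrder L] [NoMaxOrder L]
    (G : Subgroup (L ≃o L))
    (hsup : ∀ f g : L ≃o L, f ∈ G → g ∈ G → ∃ h ∈ G, ∀ x, h x = max (f x) (g x))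
    (hinf : ∀ f g : L ≃o L, f ∈ G → g ∈ G → ∃ h ∈ G, ∀ x, h x = min (f x) (g x))
    (htrans : ∀ a b : L, ∃ g ∈ G, g a = b)
    (hincl : ∀ a b c d : L, a < b → c < d → ∃ g ∈ G, (⇑g) '' Ioo a b ⊆ Ioo c d)
    {u v x y : L} (hvx : v < x) (hvy : v < y) :
    ∃ h ∈ G, h x = y ∧ ∀ z ∈ Icc u v, h z = z := by
  rcases le_total x y with hxy | hyx
  · exact exists_mem_apply_eq_of_le_fixing_Icc G hsup hinf htrans hincl hvx hxy
  · obtain ⟨h, hhG, hhy, hfix⟩ :=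
      exists_mem_apply_eq_of_le_fixing_Icc G hsup hinf htrans hincl (u := u) hvy hyx
    exact ⟨h⁻¹, G.inv_mem hhG, (congrArg (⇑h⁻¹) hhy).symm.trans (RelIso.inv_apply_self h y),
      fun z hz => (congrArg (⇑h⁻¹) (hfix z hz)).symm.trans (RelIso.inv_apply_self h z)⟩

theorem exists_mem_apply_eq_fixing_finset [NoMinOrder L] [NoMaxOrder L]
    (G : Subgroup (L ≃o L))
    (hsup : ∀ f g : L ≃o L, f ∈ G → g ∈ G → ∃ h ∈ G, ∀ x, h x = max (f x) (g x))
    (hinf : ∀ f g : L ≃o L, f ∈ G → g ∈ G → ∃ h ∈ G, ∀ x, h x = min (f x) (g x))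
    (htrans : ∀ a b : L, ∃ g ∈ G, g a = b)
    (hincl : ∀ a b c d : L, a < b → c < d → ∃ g ∈ G, (⇑g) '' Ioo a b ⊆ Ioo c d)
    (s : Finset L) {x y : L} (hsx : ∀ z ∈ s, z < x) (hsy : ∀ z ∈ s, z < y) :
    ∃ h ∈ G, h x = y ∧ ∀ z ∈ s, h z = z := by
  obtain ⟨w, hw⟩ := exists_lt (min x y)
  set t := insert w s
  have ht : t.Nonempty := Finset.insert_nonempty w s
  have hvx : t.max' ht < x := (t.max'_lt_iff ht).2 <|
    (Finset.forall_mem_insert _ _ _).2 ⟨hw.trans_le (min_le_left x y), hsx⟩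
  have hvy : t.max' ht < y := (t.max'_lt_iff ht).2 <|
    (Finset.forall_mem_insert _ _ _).2 ⟨hw.trans_le (min_le_right x y), hsy⟩
  obtain ⟨h, hhG, hhx, hfix⟩ :=
    exists_mem_apply_eq_fixing_Icc G hsup hinf htrans hincl (u := t.min' ht) hvx hvy
  have hst : ∀ z ∈ s, z ∈ t := fun z hz => Finset.mem_insert_of_mem hz
  exact ⟨h, hhG, hhx, fun z hz => hfix z ⟨t.min'_le z (hst z hz), t.le_max' z (hst z hz)⟩⟩

end

theorem stmt18_general {L : Type*} [LinearOrder L] [NoMinOrder L] [NoMaxOrder L]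
    (G : Subgroup (L ≃o L))
    (hsup : ∀ f g : L ≃o L, f ∈ G → g ∈ G → ∃ h ∈ G, ∀ x, h x = max (f x) (g x))
    (hinf : ∀ f g : L ≃o L, f ∈ G → g ∈ G → ∃ h ∈ G, ∀ x, h x = min (f x) (g x))
    (htrans : ∀ a b : L, ∃ g ∈ G, g a = b)
    (hincl : ∀ a b c d : L, a < b → c < d →
      ∃ g ∈ G, (⇑g) '' Set.Ioo a b ⊆ Set.Ioo c d) :
    ∀ n : ℕ, ∀ a b : Fin n → L, StrictMono a → StrictMono b →
      ∃ g ∈ G, ∀ i, g (a i) = b i := by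
  intro n
  induction n with
  | zero => exact fun a b _ _ => ⟨1, G.one_mem, fun i => i.elim0⟩
  | succ n ih =>
    intro a b ha hb
    obtain ⟨g, hgG, hg⟩ := ih (fun i => a i.castSucc) (fun i => b i.castSucc)
      (ha.comp Fin.strictMono_castSucc) (hb.comp Fin.strictMono_castSucc)
    obtain ⟨h, hhG, hhx, hfix⟩ := exists_mem_apply_eq_fixing_finset G hsup hinf htrans hincl
      (Finset.univ.image fun i : Fin n => b i.castSucc)
      (x := g (a (Fin.last n))) (y := b (Fin.last n))
      (Finset.forall_mem_image.2 fun j _ => hg j ▸ g.strictMono (ha (Fin.castSucc_lt_last j)))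
      (Finset.forall_mem_image.2 fun j _ => hb (Fin.castSucc_lt_last j))
    refine ⟨h * g, G.mul_mem hhG hgG, Fin.lastCases hhx fun j => ?_⟩
    exact (congrArg h (hg j)).trans (Finset.forall_mem_image.1 hfix (Finset.mem_univ j))

/-- A transitive, inclusion-transitive lattice-ordered group of automorphisms of a dense
linear order without endpoints is highly o-transitive. -/
theorem stmt18 {L : Type*} [LinearOrder L] [DenselyOrdered L] [NoMinOrder L] [NoMaxOrder L]
    (G : Subgroup (L ≃o L))
    (hsup : ∀ f g : L ≃o L, f ∈ G → g ∈ G → ∃ h ∈ G, ∀ x, h x = max (f x) (g x))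
    (hinf : ∀ f g : L ≃o L, f ∈ G → g ∈ G → ∃ h ∈ G, ∀ x, h x = min (f x) (g x))
    (htrans : ∀ a b : L, ∃ g ∈ G, g a = b)
    (hincl : ∀ a b c d : L, a < b → c < d →
      ∃ g ∈ G, (⇑g) '' Set.Ioo a b ⊆ Set.Ioo c d) :
    ∀ n : ℕ, ∀ a b : Fin n → L, StrictMono a → StrictMono b →
      ∃ g ∈ G, ∀ i, g (a i) = b i :=
  stmt18_general G hsup hinf htrans hincl
end

section
/- Let (L,G) be a highly interval-transitive linear permutation group: L a dense linear order without endpoints, G ≤ Aut(L,<), and for every n and all sequences of nonempty open intervals I₁ < ⋯ < Iₙ and J₁ < ⋯ < Jₙ of L there exists g ∈ G with g(Iᵢ) ∩ Jᵢ ≠ ∅ for all i. Then G is highly approximately o-transitive on L: for every n, all a₁ < ⋯ < aₙ in L, and all nonempty open intervals J₁ < ⋯ < Jₙ, there exists g ∈ G with g(aᵢ) ∈ Jᵢ for all i. -/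
/-- A highly interval-transitive linear permutation group is highly approximately
o-transitive: given `a₁ < ⋯ < aₙ` and intervals `J₁ < ⋯ < Jₙ` (here `Jᵢ = (rᵢ, sᵢ)`),
some `g ∈ G` maps each `aᵢ` into `Jᵢ`. -/
theorem stmt19 {L : Type*} [LinearOrder L] [DenselyOrdered L] [NoMinOrder L] [NoMaxOrder L]
    (G : Subgroup (L ≃o L))
    (hit : ∀ n : ℕ, ∀ p q r s : Fin n → L,
      (∀ i, p i < q i) → (∀ i, r i < s i) →
      (∀ i j, i < j → q i ≤ p j) → (∀ i j, i < j → s i ≤ r j) →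
      ∃ g ∈ G, ∀ i, ∃ x ∈ Set.Ioo (p i) (q i), g x ∈ Set.Ioo (r i) (s i)) :
    ∀ n : ℕ, ∀ a : Fin n → L, StrictMono a → ∀ r s : Fin n → L,
      (∀ i, r i < s i) → (∀ i j, i < j → s i ≤ r j) →
      ∃ g ∈ G, ∀ i, g (a i) ∈ Set.Ioo (r i) (s i) := by
  intro n a ha r s hrs hord
  rcases Nat.eq_zero_or_pos n with hn0 | hn0
  · subst hn0
    exact ⟨1, G.one_mem, fun i => i.elim0⟩
  -- choose midpoints of target intervals
  choose m hm1 hm2 using fun i => exists_between (hrs i)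
  -- choose separating points c : ℕ → L with c i < a i (when i < n) and a (i-1) < c i
  have hex : ∀ i : ℕ, ∃ x : L,
      (∀ h : i < n, x < a ⟨i, h⟩) ∧ (∀ j : ℕ, ∀ h2 : j < n, i = j + 1 → a ⟨j, h2⟩ < x) := by
    intro i
    match i with
    | 0 =>
      obtain ⟨x, hx⟩ := exists_lt (a ⟨0, hn0⟩)
      exact ⟨x, fun h => hx, fun j h2 hcon => by omega⟩
    | (k + 1) =>
      by_cases h : k + 1 < n
      · obtain ⟨x, hx1, hx2⟩ := exists_between
          (ha (show (⟨k, by omega⟩ : Fin n) < ⟨k + 1, h⟩ by simp [Fin.lt_def]))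
        refine ⟨x, fun h' => hx2, fun j h2 hj => ?_⟩
        obtain rfl : j = k := by omega
        exact hx1
      · by_cases h2 : k < n
        · obtain ⟨x, hx⟩ := exists_gt (a ⟨k, h2⟩)
          refine ⟨x, fun h' => absurd h' h, fun j hj hjk => ?_⟩
          obtain rfl : j = k := by omega
          exact hx
        · exact ⟨a ⟨0, hn0⟩, fun h' => absurd h' h, fun j hj hjk => by omega⟩
  choose c hc1 hc2 using hex
  -- lift Fin-indexed data to ℕ
  set an : ℕ → L := fun k => if h : k < n then a ⟨k, h⟩ else a ⟨0, hn0⟩ with han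
  set mn : ℕ → L := fun k => if h : k < n then m ⟨k, h⟩ else m ⟨0, hn0⟩ with hmn
  set rn : ℕ → L := fun k => if h : k < n then r ⟨k, h⟩ else r ⟨0, hn0⟩ with hrn
  set sn : ℕ → L := fun k => if h : k < n then s ⟨k, h⟩ else s ⟨0, hn0⟩ with hsn
  -- the 2n-interval system, as ℕ-indexed functions
  set P : ℕ → L := fun j => if j % 2 = 0 then c (j / 2) else an (j / 2) with hP
  set Q : ℕ → L := fun j => if j % 2 = 0 then an (j / 2) else c (j / 2 + 1) with hQ
  set R : ℕ → L := fun j => if j % 2 = 0 then rn (j / 2) else mn (j / 2) with hR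
  set S : ℕ → L := fun j => if j % 2 = 0 then mn (j / 2) else sn (j / 2) with hS
  -- basic facts
  have hPQ : ∀ j, j < 2 * n → P j < Q j := by
    intro j hj
    have hk : j / 2 < n := by omega
    by_cases hpar : j % 2 = 0
    · simpa [hP, hQ, hpar, han, hk] using hc1 (j / 2) hk
    · simpa [hP, hQ, hpar, han, hk] using hc2 (j / 2 + 1) (j / 2) hk rfl
  have hRS : ∀ j, j < 2 * n → R j < S j := by
    intro j hj
    have hk : j / 2 < n := by omega
    by_cases hpar : j % 2 = 0
    · simpa [hR, hS, hpar, hrn, hmn, hk] using hm1 ⟨j / 2, hk⟩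
    · simpa [hR, hS, hpar, hsn, hmn, hk] using hm2 ⟨j / 2, hk⟩
  have hQP : ∀ j, Q j = P (j + 1) := by
    intro j
    by_cases hpar : j % 2 = 0
    · have h1 : (j + 1) % 2 ≠ 0 := by omega
      have h2 : (j + 1) / 2 = j / 2 := by omega
      simp [hP, hQ, hpar, h1, h2]
    · have h1 : (j + 1) % 2 = 0 := by omega
      have h2 : (j + 1) / 2 = j / 2 + 1 := by omega
      simp [hP, hQ, hpar, h1, h2]
  have hSR : ∀ j, j + 1 < 2 * n → S j ≤ R (j + 1) := by
    intro j hj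
    by_cases hpar : j % 2 = 0
    · have h1 : (j + 1) % 2 ≠ 0 := by omega
      have h2 : (j + 1) / 2 = j / 2 := by omega
      simp [hR, hS, hpar, h1, h2]
    · have h1 : (j + 1) % 2 = 0 := by omega
      have h2 : (j + 1) / 2 = j / 2 + 1 := by omega
      have hk : j / 2 + 1 < n := by omega
      have hk' : j / 2 < n := by omega
      have := hord ⟨j / 2, hk'⟩ ⟨j / 2 + 1, hk⟩ (by simp [Fin.lt_def])
      simpa [hR, hS, hpar, h1, h2, hsn, hrn, hk, hk'] using this
  -- chaining
  have chainPQ : ∀ i j, i < j → j < 2 * n → Q i ≤ P j := by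
    intro i j hij hj
    induction hij with
    | refl => exact (hQP i).le
    | step h ih =>
      rename_i j'
      exact le_of_lt (calc Q i ≤ P j' := ih (by omega)
        _ < Q j' := hPQ j' (by omega)
        _ = P (j' + 1) := hQP j')
  have chainRS : ∀ i j, i < j → j < 2 * n → S i ≤ R j := by
    intro i j hij hj
    induction hij with
    | refl => exact hSR i (by omega)
    | step h ih =>
      rename_i j'
      exact le_of_lt (calc S i ≤ R j' := ih (by omega)
        _ < S j' := hRS j' (by omega)
        _ ≤ R (j' + 1) := hSR j' (by omega))
  -- apply interval transitivity
  obtain ⟨g, hgG, hg⟩ := hit (2 * n) (fun j => P j.val) (fun j => Q j.val)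
    (fun j => R j.val) (fun j => S j.val)
    (fun j => hPQ j.val j.isLt) (fun j => hRS j.val j.isLt)
    (fun i j hij => chainPQ i.val j.val hij j.isLt)
    (fun i j hij => chainRS i.val j.val hij j.isLt)
  refine ⟨g, hgG, fun i => ?_⟩
  have hi2 : 2 * i.val < 2 * n := by omega
  have hi2' : 2 * i.val + 1 < 2 * n := by omega
  obtain ⟨x, hx, hgx⟩ := hg ⟨2 * i.val, hi2⟩
  obtain ⟨y, hy, hgy⟩ := hg ⟨2 * i.val + 1, hi2'⟩
  have hpar1 : (2 * i.val) % 2 = 0 := by omega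
  have hpar2 : (2 * i.val + 1) % 2 ≠ 0 := by omega
  have hdiv1 : (2 * i.val) / 2 = i.val := by omega
  have hdiv2 : (2 * i.val + 1) / 2 = i.val := by omega
  simp only [hP, hQ, hR, hS, hpar1, hpar2, hdiv1, hdiv2, if_true, if_false,
    han, hmn, hrn, hsn, dif_pos i.isLt, if_pos hpar1, if_neg hpar2] at hx hy hgx hgy
  rw [Fin.eta] at hx hy hgx hgy
  -- x ∈ (c i, a i), g x ∈ (r i, m i);  y ∈ (a i, c (i+1)), g y ∈ (m i, s i)
  constructor
  · calc r i < g x := hgx.1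
      _ < g (a i) := g.strictMono hx.2
  · calc g (a i) < g y := g.strictMono hy.1
      _ < s i := hgy.2
end
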